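/- arXiv:1211.4621 — 2 statements merged into one kernel-verified Lean document; each statement's English description precedes it below -/
import Mathlib

section
/- Suppose h* ∈ Λ satisfies the dynamic user equilibrium condition: for each OD pair (i,j) and each p ∈ P_{ij}, h*_p(t) > 0 implies Ψ_p(t, h*) = v_{ij}, where v_{ij} = essinf{ Ψ_p(t, h*) : p ∈ P_{ij}, t ∈ [t_0, t_f] }. Then h* solves the variational inequality: Σ_{p ∈ P} ∫_{t_0}^{t_f} Ψ_p(t, h*)(h_p(t) − h*_p(t)) dt ≥ 0 for all h ∈ Λ. -/
/-!
At an equilibrium every path of an OD pair `w` costs at least `v w`, with equality wherever it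
carries flow. Hence `Ψ_p (h_p - h*_p) ≥ v_w (h_p - h*_p)` pointwise (where `h*_p = 0` the left
factor is `Ψ_p ≥ v_w` times `h_p ≥ 0`). Integrating and summing over the paths of `w`, the right
side becomes `v_w (Q_w - Q_w) = 0`.
-/

open Set MeasureTheory

lemma mul_sub_le_mul_sub_of_complementarity {c ψ x y : ℝ} (hc : c ≤ ψ) (hx : 0 ≤ x) (hy : 0 ≤ y)
    (hcompl : 0 < y → ψ = c) : c * (x - y) ≤ ψ * (x - y) := by
  rcases hy.eq_or_lt with rfl | hpos
  · simpa using mul_le_mul_of_nonneg_right hc hx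
  · rw [hcompl hpos]

lemma Finset.sum_eq_sum_sum_of_existsUnique_mem {ι κ M : Type*} [Fintype ι] [Fintype κ]
    [AddCommMonoid M] (s : κ → Finset ι) (hs : ∀ i, ∃! k, i ∈ s k) (f : ι → M) :
    ∑ i, f i = ∑ k, ∑ i ∈ s k, f i := by
  classical
  choose g hg using hs
  rw [← Finset.sum_fiberwise Finset.univ g f]
  refine Finset.sum_congr rfl fun k _ => Finset.sum_congr ?_ fun _ _ => rfl
  ext i
  simpa using ⟨fun h => h ▸ (hg i).1, fun h => ((hg i).2 k h).symm⟩

namespace MeasureTheory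

variable {α : Type*} [MeasurableSpace α] {μ : Measure α} [IsFiniteMeasure μ]

lemma mul_integral_sub_le_integral_mul_sub_of_complementarity {c : ℝ} {ψ f g : α → ℝ}
    (hψ : MemLp ψ 2 μ) (hf : MemLp f 2 μ) (hg : MemLp g 2 μ)
    (hc : ∀ᵐ t ∂μ, c ≤ ψ t) (hf₀ : ∀ᵐ t ∂μ, 0 ≤ f t) (hg₀ : ∀ᵐ t ∂μ, 0 ≤ g t)
    (hcompl : ∀ᵐ t ∂μ, 0 < g t → ψ t = c) :
    c * (∫ t, f t ∂μ - ∫ t, g t ∂μ) ≤ ∫ t, ψ t * (f t - g t) ∂μ := by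
  have hfi := hf.integrable one_le_two
  have hgi := hg.integrable one_le_two
  rw [← integral_sub hfi hgi, ← integral_const_mul]
  refine integral_mono_ae ((hfi.sub hgi).const_mul c) (hψ.integrable_mul (hf.sub hg)) ?_
  filter_upwards [hc, hf₀, hg₀, hcompl] with t htc htf htg htcompl
  exact mul_sub_le_mul_sub_of_complementarity htc htf htg htcompl

lemma sum_integral_mul_sub_nonneg_of_complementarity {ι : Type*} (s : Finset ι) {c : ℝ}
    {ψ h hstar : ι → α → ℝ} (hψ : ∀ p, MemLp (ψ p) 2 μ) (hL2 : ∀ p, MemLp (h p) 2 μ)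
    (hstarL2 : ∀ p, MemLp (hstar p) 2 μ) (hpos : ∀ p, ∀ᵐ t ∂μ, 0 ≤ h p t)
    (hstarpos : ∀ p, ∀ᵐ t ∂μ, 0 ≤ hstar p t) (hc : ∀ p ∈ s, ∀ᵐ t ∂μ, c ≤ ψ p t)
    (hcompl : ∀ p ∈ s, ∀ᵐ t ∂μ, 0 < hstar p t → ψ p t = c)
    (hdemand : ∑ p ∈ s, ∫ t, h p t ∂μ = ∑ p ∈ s, ∫ t, hstar p t ∂μ) :
    0 ≤ ∑ p ∈ s, ∫ t, ψ p t * (h p t - hstar p t) ∂μ :=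
  calc (0 : ℝ) = ∑ p ∈ s, c * (∫ t, h p t ∂μ - ∫ t, hstar p t ∂μ) := by
        rw [← Finset.mul_sum, Finset.sum_sub_distrib, hdemand, sub_self, mul_zero]
    _ ≤ _ := Finset.sum_le_sum fun p hp =>
        mul_integral_sub_le_integral_mul_sub_of_complementarity (hψ p) (hL2 p) (hstarL2 p)
          (hc p hp) (hpos p) (hstarpos p) (hcompl p hp)

end MeasureTheory

theorem due_implies_variational_inequality_general (t0 tf : ℝ)
    (P W : Type) [Fintype P] [Fintype W]
    (Pset : W → Finset P) (hcover : ∀ p : P, ∃! w, p ∈ Pset w)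
    (Q : W → ℝ)
    (μ : Measure ℝ) (hμ : μ = volume.restrict (Icc t0 tf))
    (Ψ : P → ℝ → ℝ) (hΨ : ∀ p, MemLp (Ψ p) 2 μ)
    (v : W → ℝ)
    (hstar : P → ℝ → ℝ) (hstarL2 : ∀ p, MemLp (hstar p) 2 μ)
    (hstarpos : ∀ p, ∀ᵐ t ∂μ, 0 ≤ hstar p t)
    (hdemand : ∀ w, ∑ p ∈ Pset w, ∫ t, hstar p t ∂μ = Q w)
    (hlb : ∀ w, ∀ p ∈ Pset w, ∀ᵐ t ∂μ, v w ≤ Ψ p t)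
    (heq : ∀ w, ∀ p ∈ Pset w, ∀ᵐ t ∂μ, 0 < hstar p t → Ψ p t = v w) :
    ∀ h : P → ℝ → ℝ, (∀ p, MemLp (h p) 2 μ) → (∀ p, ∀ᵐ t ∂μ, 0 ≤ h p t) →
      (∀ w, ∑ p ∈ Pset w, ∫ t, h p t ∂μ = Q w) →
      0 ≤ ∑ p : P, ∫ t, Ψ p t * (h p t - hstar p t) ∂μ := by
  intro h hL2 hpos hQ
  subst hμ
  rw [Finset.sum_eq_sum_sum_of_existsUnique_mem Pset hcover]
  exact Finset.sum_nonneg fun w _ =>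
    sum_integral_mul_sub_nonneg_of_complementarity (Pset w) hΨ hL2 hstarL2 hpos hstarpos
      (hlb w) (heq w) ((hQ w).trans (hdemand w).symm)

theorem due_implies_variational_inequality (t0 tf : ℝ) (ht : t0 < tf)
    (P W : Type) [Fintype P] [Fintype W]
    (Pset : W → Finset P) (hcover : ∀ p : P, ∃! w, p ∈ Pset w)
    (Q : W → ℝ)
    (μ : Measure ℝ) (hμ : μ = volume.restrict (Icc t0 tf))
    (Ψ : P → ℝ → ℝ) (hΨ : ∀ p, MemLp (Ψ p) 2 μ)
    (v : W → ℝ)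
    (hstar : P → ℝ → ℝ) (hstarL2 : ∀ p, MemLp (hstar p) 2 μ)
    (hstarpos : ∀ p, ∀ᵐ t ∂μ, 0 ≤ hstar p t)
    (hdemand : ∀ w, ∑ p ∈ Pset w, ∫ t, hstar p t ∂μ = Q w)
    (hlb : ∀ w, ∀ p ∈ Pset w, ∀ᵐ t ∂μ, v w ≤ Ψ p t)
    (heq : ∀ w, ∀ p ∈ Pset w, ∀ᵐ t ∂μ, 0 < hstar p t → Ψ p t = v w) :
    ∀ h : P → ℝ → ℝ, (∀ p, MemLp (h p) 2 μ) → (∀ p, ∀ᵐ t ∂μ, 0 ≤ h p t) →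
      (∀ w, ∑ p ∈ Pset w, ∫ t, h p t ∂μ = Q w) →
      0 ≤ ∑ p : P, ∫ t, Ψ p t * (h p t - hstar p t) ∂μ :=
  due_implies_variational_inequality_general t0 tf P W Pset hcover Q μ hμ Ψ hΨ v hstar hstarL2
    hstarpos hdemand hlb heq
end

section
/- Consider a single arc with affine delay D(x) = αx + β, α ≥ 0, β > 0. If the sequence of entering flows u^(n) converges to u in L²₊([t_0, t_f]), then the corresponding exit time functions τ^(n) converge uniformly to τ on [t_0, t_f], and the cumulative exit counts V^(n)(t) = U^(n)((τ^(n))^{-1}(t)) converge uniformly to V(t) = U(τ^{-1}(t)). -/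
/-!
Abstract the cumulative inflow `U` as any continuous nondecreasing function with `U t₀ = 0`.
By the intermediate value theorem, FIFO makes the exit count both a supremum and an infimum of
`U`: `V t = sup {U s | τ s ≤ t} = inf {U s | t ≤ τ s}`. Since every vehicle stays at least `β`
on the arc, an induction over time steps of length `β` turns this into the Lipschitz bound
`α (V b - V a) ≤ b - a`, and then into the comparison `V₁ ≤ V₂ + 2kε` on `[t₀, t₀ + (k + 1) β]`
for two arcs whose inflows satisfy `|U₁ - U₂| ≤ ε`. So uniform convergence of the cumulative
inflows, which `L²` convergence of the flows gives, passes to `V` and to `τ = t + α (U - V) + β`.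
-/

open Set Filter MeasureTheory Topology

theorem IsPreconnected.isLUB_image_of_le_of_le {X δ : Type*} [TopologicalSpace X] [LinearOrder δ]
    [DenselyOrdered δ] [TopologicalSpace δ] [OrderClosedTopology δ] {S A : Set X} {f : X → δ}
    {c : δ} (hS : IsPreconnected S) (hf : ContinuousOn f S) (hAS : A ⊆ S) (hA : A.Nonempty)
    (hle : ∀ x ∈ A, f x ≤ c) (hge : ∀ x ∈ S \ A, c ≤ f x) (hc : ∃ y ∈ S, c ≤ f y) :
    IsLUB (f '' A) c := by
  refine ⟨forall_mem_image.2 hle, fun c' hc' => not_lt.1 fun hlt => ?_⟩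
  obtain ⟨x, hx⟩ := hA
  obtain ⟨y, hyS, hy⟩ := hc
  obtain ⟨m, hc'm, hmc⟩ := exists_between hlt
  obtain ⟨z, hzS, rfl⟩ := hS.intermediate_value (hAS hx) hyS hf
    ⟨(hc' (mem_image_of_mem f hx)).trans hc'm.le, hmc.le.trans hy⟩
  by_cases hz : z ∈ A
  · exact (hc' (mem_image_of_mem f hz)).not_gt hc'm
  · exact (hge z ⟨hzS, hz⟩).not_gt hmc

theorem IsPreconnected.isGLB_image_of_le_of_le {X δ : Type*} [TopologicalSpace X] [LinearOrder δ]
    [DenselyOrdered δ] [TopologicalSpace δ] [OrderClosedTopology δ] {S A : Set X} {f : X → δ}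
    {c : δ} (hS : IsPreconnected S) (hf : ContinuousOn f S) (hAS : A ⊆ S) (hA : A.Nonempty)
    (hge : ∀ x ∈ A, c ≤ f x) (hle : ∀ x ∈ S \ A, f x ≤ c) (hc : ∃ y ∈ S, f y ≤ c) :
    IsGLB (f '' A) c :=
  hS.isLUB_image_of_le_of_le (δ := δᵒᵈ) hf hAS hA hge hle hc

theorem IsLUB.le_add_of_isGLB {α : Type*} [AddCommGroup α] [PartialOrder α]
    [IsOrderedAddMonoid α] {S T : Set α} {x y d : α} (hx : IsLUB S x) (hy : IsGLB T y)
    (h : ∀ s ∈ S, ∀ t ∈ T, s ≤ t + d) : x ≤ y + d :=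
  sub_le_iff_le_add.1 <| hy.2 fun t ht => sub_le_iff_le_add.2 <| hx.2 fun s hs => h s hs t ht

theorem Real.forall_of_step_induction {a β : ℝ} (hβ : 0 < β) {P : ℝ → Prop}
    (hlt : ∀ t < a, P t) (hstep : ∀ t, (∀ s ≤ t - β, P s) → P t) (t : ℝ) : P t := by
  suffices ∀ n : ℕ, ∀ t < a + n * β, P t by
    obtain ⟨n, hn⟩ := exists_nat_gt ((t - a) / β)
    exact this n t (by rw [div_lt_iff₀ hβ] at hn; linarith)
  intro n
  induction n with
  | zero => simpa using hlt
  | succ n ih => exact fun t ht => hstep t fun s hs => ih s (by push_cast at ht; linarith)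

theorem enorm_intervalIntegral_le_eLpNorm_one {a b t : ℝ} (f : ℝ → ℝ) (ht : t ∈ Icc a b) :
    ‖∫ s in a..t, f s‖ₑ ≤ eLpNorm f 1 (volume.restrict (Icc a b)) := by
  rw [intervalIntegral.integral_of_le ht.1, eLpNorm_one_eq_lintegral_enorm]
  exact (enorm_integral_le_lintegral_enorm f).trans
    (lintegral_mono_set (Ioc_subset_Icc_self.trans (Icc_subset_Icc_right ht.2)))

theorem tendstoUniformlyOn_intervalIntegral_of_tendsto_eLpNorm {ι : Type*} {l : Filter ι}
    {a b : ℝ} {p : ENNReal} (hp : 1 ≤ p) {u : ι → ℝ → ℝ} {v : ℝ → ℝ}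
    (hu : ∀ i, IntegrableOn (u i) (Icc a b)) (hv : IntegrableOn v (Icc a b))
    (h : Tendsto (fun i => eLpNorm (u i - v) p (volume.restrict (Icc a b))) l (𝓝 0)) :
    TendstoUniformlyOn (fun i t => ∫ s in a..t, u i s) (fun t => ∫ s in a..t, v s) l
      (Icc a b) := by
  set μ := volume.restrict (Icc a b)
  have hL1 : Tendsto (fun i => eLpNorm (u i - v) 1 μ) l (𝓝 0) := by
    have hC : μ univ ^ (1 / (1 : ENNReal).toReal - 1 / p.toReal) ≠ ⊤ :=
      ENNReal.rpow_ne_top_of_nonneg (sub_nonneg.2 ?_) (by simp [μ])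
    refine tendsto_of_tendsto_of_tendsto_of_le_of_le tendsto_const_nhds
      (by simpa using ENNReal.Tendsto.mul_const h (.inr hC)) (fun _ => zero_le)
      fun i => eLpNorm_le_eLpNorm_mul_rpow_measure_univ hp ((hu i).sub hv).aestronglyMeasurable
    rcases eq_or_ne p ⊤ with rfl | hp'
    · simp
    · simpa using div_le_one_of_le₀ (ENNReal.toReal_mono hp' hp) ENNReal.toReal_nonneg
  rw [EMetric.tendstoUniformlyOn_iff]
  intro ε hε
  filter_upwards [hL1.eventually (gt_mem_nhds hε)] with i hi t ht
  have hint {w : ℝ → ℝ} (hw : IntegrableOn w (Icc a b)) : IntervalIntegrable w volume a t :=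
    (hw.mono_set (uIcc_subset_Icc (left_mem_Icc.2 (ht.1.trans ht.2)) ht)).intervalIntegrable
  rw [edist_comm, edist_eq_enorm_sub, ← intervalIntegral.integral_sub (hint (hu i)) (hint hv)]
  exact (enorm_intervalIntegral_le_eLpNorm_one (u i - v) ht).trans_lt hi

def exitTime (α β : ℝ) (U V : ℝ → ℝ) (t : ℝ) : ℝ := t + α * (U t - V t) + β

/-- `U` is the cumulative inflow and `V` the cumulative exit count of the arc; in the flow model
`U t = ∫ s in t0..t, u s`. -/
structure IsArcFlow (t0 tf α β : ℝ) (U V : ℝ → ℝ) : Prop where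
  inflow_continuousOn : ContinuousOn U (Icc t0 tf)
  inflow_monotoneOn : MonotoneOn U (Icc t0 tf)
  inflow_start : U t0 = 0
  outflow_monotone : Monotone V
  outflow_eq_zero : ∀ t ≤ t0, V t = 0
  fifo : ∀ t ∈ Icc t0 tf, V (exitTime α β U V t) = U t

namespace IsArcFlow

variable {t0 tf α β : ℝ} {U V : ℝ → ℝ}

theorem exitTime_start (h : IsArcFlow t0 tf α β U V) : exitTime α β U V t0 = t0 + β := by
  simp [exitTime, h.inflow_start, h.outflow_eq_zero t0 le_rfl]

theorem outflow_nonneg (h : IsArcFlow t0 tf α β U V) (t : ℝ) : 0 ≤ V t := by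
  rcases le_total t t0 with ht | ht
  · exact (h.outflow_eq_zero t ht).ge
  · exact (h.outflow_eq_zero t0 le_rfl).symm.le.trans (h.outflow_monotone ht)

theorem inflow_nonneg (h : IsArcFlow t0 tf α β U V) {t : ℝ} (ht : t ∈ Icc t0 tf) : 0 ≤ U t :=
  h.inflow_start ▸ h.inflow_monotoneOn (left_mem_Icc.2 (ht.1.trans ht.2)) ht ht.1

theorem outflow_eq_zero_of_le_add (h : IsArcFlow t0 tf α β U V) (htf : t0 ≤ tf) {t : ℝ}
    (ht : t ≤ t0 + β) : V t = 0 := by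
  refine le_antisymm ?_ (h.outflow_nonneg t)
  calc V t ≤ V (exitTime α β U V t0) := h.outflow_monotone (h.exitTime_start ▸ ht)
    _ = 0 := (h.fifo t0 (left_mem_Icc.2 htf)).trans h.inflow_start

theorem inflow_le_outflow_of_exitTime_le (h : IsArcFlow t0 tf α β U V) {s t : ℝ}
    (hs : s ∈ Icc t0 tf) (hst : exitTime α β U V s ≤ t) : U s ≤ V t :=
  h.fifo s hs ▸ h.outflow_monotone hst

theorem outflow_le_inflow_of_le_exitTime (h : IsArcFlow t0 tf α β U V) {s t : ℝ}
    (hs : s ∈ Icc t0 tf) (hst : t ≤ exitTime α β U V s) : V t ≤ U s :=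
  h.fifo s hs ▸ h.outflow_monotone hst

theorem outflow_le_inflow (h : IsArcFlow t0 tf α β U V) (hα : 0 ≤ α) (hβ : 0 < β) {t : ℝ}
    (ht : t ∈ Icc t0 tf) : V t ≤ U t := by
  refine Real.forall_of_step_induction hβ (a := t0) (P := fun t => t ∈ Icc t0 tf → V t ≤ U t)
    (fun t ht ht' => absurd ht'.1 (not_le.2 ht)) (fun t ih ht => ?_) t ht
  rcases le_or_gt t (t0 + β) with hle | hlt
  · exact (h.outflow_eq_zero_of_le_add (ht.1.trans ht.2) hle).trans_le (h.inflow_nonneg ht)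
  have hs : t - β ∈ Icc t0 tf := ⟨by linarith, by linarith [ht.2]⟩
  have hτ : t ≤ exitTime α β U V (t - β) := by
    have := mul_nonneg hα (sub_nonneg.2 (ih (t - β) le_rfl hs))
    unfold exitTime; linarith
  exact (h.outflow_le_inflow_of_le_exitTime hs hτ).trans
    (h.inflow_monotoneOn hs ht (by linarith))

theorem add_le_exitTime (h : IsArcFlow t0 tf α β U V) (hα : 0 ≤ α) (hβ : 0 < β) {t : ℝ}
    (ht : t ∈ Icc t0 tf) : t + β ≤ exitTime α β U V t := by
  have := mul_nonneg hα (sub_nonneg.2 (h.outflow_le_inflow hα hβ ht))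
  unfold exitTime; linarith

theorem isLUB_inflow_image (h : IsArcFlow t0 tf α β U V) (hα : 0 ≤ α) (hβ : 0 < β) {t : ℝ}
    (ht : t ∈ Icc (t0 + β) (tf + β)) :
    IsLUB (U '' {s ∈ Icc t0 tf | exitTime α β U V s ≤ t}) (V t) := by
  have htf : t0 ≤ tf := by linarith [ht.1, ht.2]
  refine isPreconnected_Icc.isLUB_image_of_le_of_le h.inflow_continuousOn (sep_subset _ _)
    ⟨t0, left_mem_Icc.2 htf, h.exitTime_start ▸ ht.1⟩
    (fun _ hs => h.inflow_le_outflow_of_exitTime_le hs.1 hs.2)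
    (fun _ hs => h.outflow_le_inflow_of_le_exitTime hs.1 (not_le.1 fun h' => hs.2 ⟨hs.1, h'⟩).le)
    ⟨tf, right_mem_Icc.2 htf, h.outflow_le_inflow_of_le_exitTime (right_mem_Icc.2 htf)
      (ht.2.trans (h.add_le_exitTime hα hβ (right_mem_Icc.2 htf)))⟩

theorem isGLB_inflow_image (h : IsArcFlow t0 tf α β U V) (hα : 0 ≤ α) (hβ : 0 < β)
    (htf : t0 ≤ tf) {t : ℝ} (ht : t ≤ tf + β) :
    IsGLB (U '' {s ∈ Icc t0 tf | t ≤ exitTime α β U V s}) (V t) :=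
  isPreconnected_Icc.isGLB_image_of_le_of_le h.inflow_continuousOn (sep_subset _ _)
    ⟨tf, right_mem_Icc.2 htf, ht.trans (h.add_le_exitTime hα hβ (right_mem_Icc.2 htf))⟩
    (fun _ hs => h.outflow_le_inflow_of_le_exitTime hs.1 hs.2)
    (fun _ hs => h.inflow_le_outflow_of_exitTime_le hs.1 (not_le.1 fun h' => hs.2 ⟨hs.1, h'⟩).le)
    ⟨t0, left_mem_Icc.2 htf, h.inflow_start.trans_le (h.outflow_nonneg t)⟩

theorem mul_outflow_sub_le (h : IsArcFlow t0 tf α β U V) (hα : 0 ≤ α) (hβ : 0 < β)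
    (htf : t0 ≤ tf) {a b : ℝ} (ha : t0 ≤ a) (hab : a ≤ b) (hb : b ≤ tf + β) :
    α * (V b - V a) ≤ b - a := by
  refine Real.forall_of_step_induction hβ (a := t0)
    (P := fun b => b ≤ tf + β → ∀ a, t0 ≤ a → a ≤ b → α * (V b - V a) ≤ b - a)
    (fun b hb _ a ha hab => absurd (ha.trans hab) (not_le.2 hb)) (fun b ih hb a ha hab => ?_)
    b hb a ha hab
  rcases le_or_gt b (t0 + β) with hb0 | hb0
  · have := mul_nonneg hα (h.outflow_nonneg a)
    rw [h.outflow_eq_zero_of_le_add htf hb0]; linarith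
  have hsup := (h.isLUB_inflow_image hα hβ ⟨hb0.le, hb⟩).mul_left hα
  have hinf := (h.isGLB_inflow_image hα hβ htf (hab.trans hb)).mul_left hα
  have hlip := hsup.le_add_of_isGLB hinf (d := b - a) (by
    simp only [forall_mem_image]
    rintro s ⟨hs, hsb⟩ s' ⟨hs', has'⟩
    rcases le_total s s' with hss' | hs's
    · nlinarith [mul_le_mul_of_nonneg_left (h.inflow_monotoneOn hs hs' hss') hα]
    -- `τ s ≤ b` puts `s` in the range of the induction hypothesis, which bounds the outflow
    -- part of `τ s - τ s' ≤ b - a` and leaves `α (U s - U s') ≤ b - a`.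
    have hsβ : s ≤ b - β := by linarith [h.add_le_exitTime hα hβ hs]
    have := ih s hsβ (by linarith [hs.2]) s' hs'.1 hs's
    unfold exitTime at hsb has'
    linarith)
  rw [mul_sub]
  linarith

theorem outflow_add_mul_le (h : IsArcFlow t0 tf α β U V) (hα : 0 ≤ α) (hβ : 0 < β)
    (htf : t0 ≤ tf) {t c : ℝ} (ht : t0 ≤ t) (hc : 0 ≤ c) (htc : t + α * c ≤ tf + β) :
    V (t + α * c) ≤ V t + c := by
  rcases hα.eq_or_lt with rfl | hα
  · simpa using hc
  have := h.mul_outflow_sub_le hα.le hβ htf ht (le_add_of_nonneg_right (by positivity)) htc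
  rw [add_sub_cancel_left] at this
  linarith [le_of_mul_le_mul_left this hα]

theorem outflow_le_add_of_abs_inflow_sub_le {U' V' : ℝ → ℝ} (h : IsArcFlow t0 tf α β U V)
    (h' : IsArcFlow t0 tf α β U' V') (hα : 0 ≤ α) (hβ : 0 < β) (htf : t0 ≤ tf) {ε : ℝ}
    (hε : 0 ≤ ε) (hU : ∀ t ∈ Icc t0 tf, |U t - U' t| ≤ ε) (k : ℕ)
    (hk : (2 * k + 1) * (α * ε) ≤ β) {t : ℝ} (ht : t ∈ Icc t0 tf)
    (htk : t ≤ t0 + (k + 1) * β) : V t ≤ V' t + 2 * k * ε := by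
  induction k generalizing t with
  | zero =>
    rw [h.outflow_eq_zero_of_le_add htf (by simpa using htk)]
    simpa using h'.outflow_nonneg t
  | succ k ih =>
    push_cast at hk htk ⊢
    rcases le_or_gt t (t0 + β) with ht0 | ht0
    · rw [h.outflow_eq_zero_of_le_add htf ht0]
      linarith [h'.outflow_nonneg t, mul_nonneg (by positivity : (0 : ℝ) ≤ 2 * (k + 1)) hε]
    have hαε : 0 ≤ α * ε := mul_nonneg hα hε
    have hkαε : 0 ≤ k * (α * ε) := by positivity
    have hV' : V' (t + α * ((2 * k + 1) * ε)) ≤ V' t + (2 * k + 1) * ε :=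
      h'.outflow_add_mul_le hα hβ htf ht.1 (by positivity) (by linarith [ht.2])
    refine (isLUB_le_iff (h.isLUB_inflow_image hα hβ ⟨ht0.le, by linarith [ht.2]⟩)).2 ?_
    rintro _ ⟨s, ⟨hs, hst⟩, rfl⟩
    have hsk : s ≤ t0 + (k + 1) * β := by linarith [h.add_le_exitTime hα hβ hs]
    have hVs := ih (by linarith) hs hsk
    have hUs := abs_le.1 (hU s hs)
    -- On the second arc, `s` exits at most `(2k + 1) α ε` later, and `hV'` bounds the extra count.
    have hτ : exitTime α β U' V' s ≤ t + α * ((2 * k + 1) * ε) := by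
      unfold exitTime at hst ⊢
      nlinarith [mul_le_mul_of_nonneg_left hUs.1 hα, mul_le_mul_of_nonneg_left hVs hα]
    linarith [h'.inflow_le_outflow_of_exitTime_le hs hτ]

theorem abs_outflow_sub_le {U' V' : ℝ → ℝ} (h : IsArcFlow t0 tf α β U V)
    (h' : IsArcFlow t0 tf α β U' V') (hα : 0 ≤ α) (hβ : 0 < β) (htf : t0 ≤ tf) {ε : ℝ}
    (hε : 0 ≤ ε) (hU : ∀ t ∈ Icc t0 tf, |U t - U' t| ≤ ε) {N : ℕ} (hN : tf ≤ t0 + (N + 1) * β)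
    (hNε : (2 * N + 1) * (α * ε) ≤ β) {t : ℝ} (ht : t ∈ Icc t0 tf) :
    |V t - V' t| ≤ 2 * N * ε := by
  have hU' : ∀ t ∈ Icc t0 tf, |U' t - U t| ≤ ε := fun s hs => abs_sub_comm (U s) (U' s) ▸ hU s hs
  have := h.outflow_le_add_of_abs_inflow_sub_le h' hα hβ htf hε hU N hNε ht (ht.2.trans hN)
  have := h'.outflow_le_add_of_abs_inflow_sub_le h hα hβ htf hε hU' N hNε ht (ht.2.trans hN)
  exact abs_sub_le_iff.2 ⟨by linarith, by linarith⟩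

theorem tendstoUniformlyOn_outflow {ι : Type*} {l : Filter ι} {U V : ι → ℝ → ℝ}
    {U₀ V₀ : ℝ → ℝ} (h : ∀ i, IsArcFlow t0 tf α β (U i) (V i)) (h₀ : IsArcFlow t0 tf α β U₀ V₀)
    (hα : 0 ≤ α) (hβ : 0 < β) (htf : t0 ≤ tf) (hU : TendstoUniformlyOn U U₀ l (Icc t0 tf)) :
    TendstoUniformlyOn V V₀ l (Icc t0 tf) := by
  obtain ⟨N, hN⟩ := exists_nat_ge ((tf - t0) / β)
  have hNtf : tf ≤ t0 + (N + 1) * β := by rw [div_le_iff₀ hβ] at hN; linarith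
  rw [Metric.tendstoUniformlyOn_iff] at hU ⊢
  intro η hη
  obtain ⟨ε₁, hε₁, hε₁β⟩ := exists_pos_mul_lt hβ ((2 * N + 1) * α)
  obtain ⟨ε₂, hε₂, hε₂η⟩ := exists_pos_mul_lt hη (2 * N)
  set ε := min ε₁ ε₂
  have hε : 0 < ε := lt_min hε₁ hε₂
  have hεβ : (2 * N + 1) * (α * ε) ≤ β := by
    rw [← mul_assoc]
    exact (mul_le_mul_of_nonneg_left (min_le_left _ _) (by positivity)).trans hε₁β.le
  have hεη : 2 * N * ε < η :=
    (mul_le_mul_of_nonneg_left (min_le_right _ _) (by positivity)).trans_lt hε₂η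
  filter_upwards [hU ε hε] with i hi t ht
  have hUi : ∀ s ∈ Icc t0 tf, |U₀ s - U i s| ≤ ε := fun s hs => (Real.dist_eq _ _ ▸ hi s hs).le
  rw [Real.dist_eq]
  exact (h₀.abs_outflow_sub_le (h i) hα hβ htf hε.le hUi hNtf hεβ ht).trans_lt hεη

end IsArcFlow

theorem tendstoUniformlyOn_exitTime {ι : Type*} {l : Filter ι} {α β : ℝ} {s : Set ℝ}
    {U V : ι → ℝ → ℝ} {U₀ V₀ : ℝ → ℝ} (hU : TendstoUniformlyOn U U₀ l s)
    (hV : TendstoUniformlyOn V V₀ l s) :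
    TendstoUniformlyOn (fun i => exitTime α β (U i) (V i)) (exitTime α β U₀ V₀) l s := by
  have hconst : TendstoUniformlyOn (fun (_ : ι) (t : ℝ) => t + β) (fun t => t + β) l s :=
    fun _ hu => .of_forall fun _ _ _ => refl_mem_uniformity hu
  convert hconst.fun_add ((uniformContinuous_mul_left' α).comp_tendstoUniformlyOn (hU.sub hV))
    using 1 <;> (ext; simp only [exitTime, Function.comp_apply, Pi.sub_apply]; ring)

theorem isArcFlow_intervalIntegral {t0 tf α β : ℝ} {u V : ℝ → ℝ}
    (hu : IntegrableOn u (Icc t0 tf)) (hpos : ∀ t ∈ Icc t0 tf, 0 ≤ u t) (hV : Monotone V)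
    (hV0 : ∀ t ≤ t0, V t = 0)
    (hfifo : ∀ t ∈ Icc t0 tf,
      V (exitTime α β (fun t => ∫ s in t0..t, u s) V t) = ∫ s in t0..t, u s) :
    IsArcFlow t0 tf α β (fun t => ∫ s in t0..t, u s) V := by
  have hint {a b : ℝ} (ha : a ∈ Icc t0 tf) (hb : b ∈ Icc t0 tf) :
      IntervalIntegrable u volume a b :=
    (hu.mono_set (uIcc_subset_Icc ha hb)).intervalIntegrable
  refine ⟨?_, fun a ha b hb hab => ?_, intervalIntegral.integral_same, hV, hV0, hfifo⟩
  · rcases le_or_gt t0 tf with htf | htf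
    · simpa [uIcc_of_le htf] using
        intervalIntegral.continuousOn_primitive_interval (μ := volume) (a := t0) (b := tf)
          (by rwa [uIcc_of_le htf])
    · simp [Icc_eq_empty_of_lt htf]
  · have ht0 : t0 ∈ Icc t0 tf := left_mem_Icc.2 (ha.1.trans ha.2)
    rw [← sub_nonneg, intervalIntegral.integral_interval_sub_left (hint ht0 hb) (hint ht0 ha)]
    exact intervalIntegral.integral_nonneg hab fun t ht =>
      hpos t ⟨ha.1.trans ht.1, ht.2.trans hb.2⟩

theorem single_arc_exit_time_and_exit_count_uniform_conv
    (t0 tf α β : ℝ) (ht : t0 < tf) (hα : 0 ≤ α) (hβ : 0 < β)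
    (u : ℕ → ℝ → ℝ) (ulim : ℝ → ℝ)
    (huL2 : ∀ n, MemLp (u n) 2 (volume.restrict (Icc t0 tf)))
    (hulimL2 : MemLp ulim 2 (volume.restrict (Icc t0 tf)))
    (hupos : ∀ n t, 0 ≤ u n t) (hulimpos : ∀ t, 0 ≤ ulim t)
    (hconv : Tendsto
      (fun n => eLpNorm (u n - ulim) 2 (volume.restrict (Icc t0 tf))) atTop (nhds 0))
    (τn : ℕ → ℝ → ℝ) (τ : ℝ → ℝ) (Vn : ℕ → ℝ → ℝ) (V : ℝ → ℝ)
    (hVmono : ∀ n, Monotone (Vn n)) (hVlimmono : Monotone V)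
    (hV0 : ∀ n t, t ≤ t0 → Vn n t = 0) (hVlim0 : ∀ t, t ≤ t0 → V t = 0)
    (hτdef : ∀ n t, τn n t = t + α * ((∫ s in t0..t, u n s) - Vn n t) + β)
    (hτlimdef : ∀ t, τ t = t + α * ((∫ s in t0..t, ulim s) - V t) + β)
    (hFIFOn : ∀ n, ∀ t ∈ Icc t0 tf, Vn n (τn n t) = ∫ s in t0..t, u n s)
    (hFIFO : ∀ t ∈ Icc t0 tf, V (τ t) = ∫ s in t0..t, ulim s) :
    TendstoUniformlyOn τn τ atTop (Icc t0 tf) ∧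
    TendstoUniformlyOn Vn V atTop (Icc t0 tf) := by
  obtain rfl : τn = fun n => exitTime α β (fun t => ∫ s in t0..t, u n s) (Vn n) :=
    funext fun n => funext (hτdef n)
  obtain rfl : τ = exitTime α β (fun t => ∫ s in t0..t, ulim s) V := funext hτlimdef
  have hflow n := isArcFlow_intervalIntegral ((huL2 n).integrable one_le_two)
    (fun t _ => hupos n t) (hVmono n) (hV0 n) (hFIFOn n)
  have hflow₀ := isArcFlow_intervalIntegral (hulimL2.integrable one_le_two)
    (fun t _ => hulimpos t) hVlimmono hVlim0 hFIFO
  have hU := tendstoUniformlyOn_intervalIntegral_of_tendsto_eLpNorm one_le_two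
    (fun n => (huL2 n).integrable one_le_two) (hulimL2.integrable one_le_two) hconv
  have hV := IsArcFlow.tendstoUniformlyOn_outflow hflow hflow₀ hα hβ ht.le hU
  exact ⟨tendstoUniformlyOn_exitTime hU hV, hV⟩
end
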